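/- Let W be a constant with w(x) ≤ W for all x∈ℝ, and let a(T) and ā(T) be the optimal terminal asset values for horizon T for the problems with wage distribution w(x) and with constant wage W, respectively, all other parameters being identical. Then a(T) ≤ ā(T). -/

import Mathlib

/-! Under the common consumption rule `c = Ψ · a(T)` the asset equation is linear in `a(T)`:
`a(T) (1 + e^{rT} ∫₀ᵀ p Ψ e^{-rs} ds) = e^{rT} (a₀ + ∫₀ᵀ (w(x) - ξ z²) e^{-rs} ds)`.
The right-hand side only grows when `w` is replaced by `W ≥ w` and `z` by `0`. -/

open MeasureTheory Set Filter

/-- Spatial state: `x(t) = x₀ + ∫₀ᵗ z(s) ds`. -/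
noncomputable def stateX (x₀ : ℝ) (z : ℝ → ℝ) (t : ℝ) : ℝ :=
  x₀ + ∫ s in (0:ℝ)..t, z s

/-- Asset state:
`a(t) = e^{rt} (a₀ + ∫₀ᵗ (w(x(s)) - p c(s) - ξ z(s)²) e^{-rs} ds)`. -/
noncomputable def stateA (r p ξ a₀ x₀ : ℝ) (w : ℝ → ℝ) (c z : ℝ → ℝ) (t : ℝ) : ℝ :=
  Real.exp (r * t) *
    (a₀ + ∫ s in (0:ℝ)..t,
      (w (stateX x₀ z s) - p * c s - ξ * (z s) ^ 2) * Real.exp (-(r * s)))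

/-- The objective functional `J(c,z)`. -/
noncomputable def obj (ρ r η ξ p θ T a₀ x₀ : ℝ) (w : ℝ → ℝ) (c z : ℝ → ℝ) : ℝ :=
  (∫ t in (0:ℝ)..T, Real.exp (-(ρ * t)) * ((c t) ^ (1 - θ) / (1 - θ) - η * (z t) ^ 2)) +
    Real.exp (-(ρ * T)) * (stateA r p ξ a₀ x₀ w c z T) ^ (1 - θ) / (1 - θ)

/-- `sup_x |w(x)|`. -/
noncomputable def wSup (w : ℝ → ℝ) : ℝ := ⨆ x : ℝ, |w x|

/-- `sup_x |w'(x)|`. -/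
noncomputable def wDerivSup (w : ℝ → ℝ) : ℝ := ⨆ x : ℝ, |deriv w x|

/-- Standing assumptions on the wage distribution `w`. -/
def WageAssumptions (w : ℝ → ℝ) : Prop :=
  ContDiff ℝ 2 w ∧ (∃ M : ℝ, ∀ x : ℝ, |w x| ≤ M) ∧
    (∀ x ∈ Set.Ioo (0:ℝ) 1, 0 < w x) ∧ (∀ x : ℝ, x ∉ Set.Icc (0:ℝ) 1 → w x < 0) ∧
    (∀ x : ℝ, x ≤ 0 → 0 < deriv w x) ∧ (∀ x : ℝ, 1 ≤ x → deriv w x < 0)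

/-- Constraint on the consumption cap `C`:
`C^θ > max(1, μ^{1/θ}) (a₀ + T sup|w|)/(p (1-e^{-rT})/r)`, where
`μ = max_{t,t₀ ∈ [0,T]} e^{(r-ρ)(t-t₀)} = e^{|r-ρ| T}`. -/
def CapC (ρ r p θ T a₀ C : ℝ) (w : ℝ → ℝ) : Prop :=
  C ^ θ > max 1 (Real.exp (|r - ρ| * T) ^ (1 / θ)) *
    ((a₀ + T * wSup w) / (p * (1 - Real.exp (-(r * T))) / r))

/-- Constraint on the relocation-speed cap `Z`. -/
def CapZ (r ξ T Z : ℝ) (w : ℝ → ℝ) : Prop :=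
  Z > T * wDerivSup w * Real.exp (r * T) / (2 * ξ)

/-- A control pair: measurable controls satisfying the pointwise caps on `[0,T]`. -/
def ControlPair (T C Z : ℝ) (c z : ℝ → ℝ) : Prop :=
  Measurable c ∧ Measurable z ∧
    (∀ t ∈ Set.Icc (0:ℝ) T, c t ∈ Set.Icc (0:ℝ) C) ∧
    (∀ t ∈ Set.Icc (0:ℝ) T, |z t| ≤ Z)

/-- Admissibility: a control pair with nonnegative terminal assets. -/
def Admissible (r p ξ T a₀ x₀ C Z : ℝ) (w : ℝ → ℝ) (c z : ℝ → ℝ) : Prop :=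
  ControlPair T C Z c z ∧ 0 ≤ stateA r p ξ a₀ x₀ w c z T

/-- Optimality: admissible and maximizing `J` over all admissible pairs. -/
def Optimal (ρ r η ξ p θ T a₀ x₀ C Z : ℝ) (w : ℝ → ℝ) (c z : ℝ → ℝ) : Prop :=
  Admissible r p ξ T a₀ x₀ C Z w c z ∧
    ∀ c' z' : ℝ → ℝ, Admissible r p ξ T a₀ x₀ C Z w c' z' →
      obj ρ r η ξ p θ T a₀ x₀ w c' z' ≤ obj ρ r η ξ p θ T a₀ x₀ w c z

/-- Admissibility without control caps (long-horizon analysis):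
measurable nonnegative consumption, measurable relocation speed,
nonnegative terminal assets. -/
def Admissible' (r p ξ T a₀ x₀ : ℝ) (w : ℝ → ℝ) (c z : ℝ → ℝ) : Prop :=
  Measurable c ∧ Measurable z ∧ (∀ t ∈ Set.Icc (0:ℝ) T, 0 ≤ c t) ∧
    0 ≤ stateA r p ξ a₀ x₀ w c z T

/-- Optimality for the problem without control caps. -/
def Optimal' (ρ r η ξ p θ T a₀ x₀ : ℝ) (w : ℝ → ℝ) (c z : ℝ → ℝ) : Prop :=
  Admissible' r p ξ T a₀ x₀ w c z ∧
    ∀ c' z' : ℝ → ℝ, Admissible' r p ξ T a₀ x₀ w c' z' →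
      obj ρ r η ξ p θ T a₀ x₀ w c' z' ≤ obj ρ r η ξ p θ T a₀ x₀ w c z

open Real

lemma IntervalIntegrable.of_sq {f : ℝ → ℝ} {a b : ℝ} (hf : AEStronglyMeasurable f)
    (h : IntervalIntegrable (fun x => f x ^ 2) volume a b) : IntervalIntegrable f volume a b :=
  ⟨((memLp_two_iff_integrable_sq hf.restrict).2 h.1).integrable one_le_two,
    ((memLp_two_iff_integrable_sq hf.restrict).2 h.2).integrable one_le_two⟩

lemma IntervalIntegrable.of_continuous_mul {f g : ℝ → ℝ} {a b : ℝ} (hg : Continuous g)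
    (hg0 : ∀ x, g x ≠ 0) (h : IntervalIntegrable (fun x => g x * f x) volume a b) :
    IntervalIntegrable f volume a b := by
  convert h.continuousOn_mul (hg.inv₀ hg0).continuousOn using 1
  funext x
  simp [hg0 x]

noncomputable def discountedNetWage (r ξ x₀ : ℝ) (w z : ℝ → ℝ) (s : ℝ) : ℝ :=
  (w (stateX x₀ z s) - ξ * z s ^ 2) * exp (-(r * s))

section Household

variable {ρ r η ξ p θ T a₀ x₀ W A : ℝ} {w c z Ψ : ℝ → ℝ}

lemma continuousOn_stateX (hz : IntervalIntegrable z volume 0 T) :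
    ContinuousOn (stateX x₀ z) (uIcc 0 T) :=
  continuousOn_const.add (intervalIntegral.continuousOn_primitive_interval' hz left_mem_uIcc)

lemma intervalIntegrable_discountedNetWage (hw : Continuous w) (hz : Measurable z)
    (hz2 : IntervalIntegrable (fun s => z s ^ 2) volume 0 T) :
    IntervalIntegrable (discountedNetWage r ξ x₀ w z) volume 0 T := by
  have hx := continuousOn_stateX (x₀ := x₀) (hz2.of_sq hz.aestronglyMeasurable)
  exact ((hw.comp_continuousOn hx).intervalIntegrable.sub (hz2.const_mul ξ)).mul_continuousOn
    (by fun_prop)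

lemma intervalIntegrable_discountedNetWage_const (hT : 0 ≤ T) (hz : ∀ t ∈ Icc 0 T, z t = 0) :
    IntervalIntegrable (discountedNetWage r ξ x₀ (fun _ => W) z) volume 0 T := by
  refine ((by fun_prop : Continuous fun s => W * exp (-(r * s))).intervalIntegrable _ _).congr
    fun s hs => ?_
  rw [uIoc_of_le hT] at hs
  simp [discountedNetWage, hz s (Ioc_subset_Icc_self hs)]

lemma stateA_eq_of_consumption_rule (hT : 0 ≤ T)
    (hc : ∀ t ∈ Icc 0 T, c t = Ψ t * stateA r p ξ a₀ x₀ w c z T) :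
    stateA r p ξ a₀ x₀ w c z T = exp (r * T) * (a₀ + ∫ s in 0..T,
      (discountedNetWage r ξ x₀ w z s -
        stateA r p ξ a₀ x₀ w c z T * (p * Ψ s * exp (-(r * s))))) := by
  conv_lhs => rw [stateA]
  congr 2
  refine intervalIntegral.integral_congr fun s hs => ?_
  rw [uIcc_of_le hT] at hs
  simp only [discountedNetWage, hc s hs]
  ring

lemma stateA_mul_eq (hT : 0 ≤ T) (hΨ : Continuous Ψ)
    (hc : ∀ t ∈ Icc 0 T, c t = Ψ t * stateA r p ξ a₀ x₀ w c z T)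
    (hG : IntervalIntegrable (discountedNetWage r ξ x₀ w z) volume 0 T) :
    stateA r p ξ a₀ x₀ w c z T * (1 + exp (r * T) * ∫ s in 0..T, p * Ψ s * exp (-(r * s))) =
      exp (r * T) * (a₀ + ∫ s in 0..T, discountedNetWage r ξ x₀ w z s) := by
  have hA := stateA_eq_of_consumption_rule hT hc
  rw [intervalIntegral.integral_sub hG ((by fun_prop : Continuous _).intervalIntegrable _ _),
    intervalIntegral.integral_const_mul] at hA
  linear_combination hA

lemma stateA_eq_of_not_intervalIntegrable (hT : 0 ≤ T) (hΨ : Continuous Ψ)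
    (hc : ∀ t ∈ Icc 0 T, c t = Ψ t * stateA r p ξ a₀ x₀ w c z T)
    (hG : ¬ IntervalIntegrable (discountedNetWage r ξ x₀ w z) volume 0 T) :
    stateA r p ξ a₀ x₀ w c z T = exp (r * T) * a₀ := by
  rw [stateA_eq_of_consumption_rule hT hc, intervalIntegral.integral_undef, add_zero]
  refine fun h => hG ?_
  convert h.add (g := fun s => stateA r p ξ a₀ x₀ w c z T * (p * Ψ s * exp (-(r * s))))
    ((by fun_prop : Continuous _).intervalIntegrable _ _) using 1
  funext s
  simp

lemma stateA_le_stateA_of_integral_le {w₂ c₂ z₂ : ℝ → ℝ} (hT : 0 ≤ T) (hp : 0 ≤ p)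
    (hΨ : Continuous Ψ) (hΨ0 : ∀ t, 0 ≤ Ψ t)
    (hc : ∀ t ∈ Icc 0 T, c t = Ψ t * stateA r p ξ a₀ x₀ w c z T)
    (hc₂ : ∀ t ∈ Icc 0 T, c₂ t = Ψ t * stateA r p ξ a₀ x₀ w₂ c₂ z₂ T)
    (hG : IntervalIntegrable (discountedNetWage r ξ x₀ w z) volume 0 T)
    (hG₂ : IntervalIntegrable (discountedNetWage r ξ x₀ w₂ z₂) volume 0 T)
    (hle : ∫ s in 0..T, discountedNetWage r ξ x₀ w z s ≤
      ∫ s in 0..T, discountedNetWage r ξ x₀ w₂ z₂ s) :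
    stateA r p ξ a₀ x₀ w c z T ≤ stateA r p ξ a₀ x₀ w₂ c₂ z₂ T := by
  have hK : 0 ≤ ∫ s in 0..T, p * Ψ s * exp (-(r * s)) :=
    intervalIntegral.integral_nonneg hT fun s _ => by have := hΨ0 s; positivity
  refine le_of_mul_le_mul_right ?_
    (add_pos_of_pos_of_nonneg one_pos (mul_nonneg (exp_pos (r * T)).le hK))
  rw [stateA_mul_eq hT hΨ hc hG, stateA_mul_eq hT hΨ hc₂ hG₂]
  gcongr

lemma intervalIntegrable_discounted_utility (hT : 0 ≤ T) (hθ : θ ≤ 1) (hΨ : Continuous Ψ)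
    (hc : ∀ t ∈ Icc 0 T, c t = Ψ t * A) :
    IntervalIntegrable (fun t => exp (-(ρ * t)) * (c t ^ (1 - θ) / (1 - θ))) volume 0 T := by
  have hu : Continuous fun t => exp (-(ρ * t)) * ((Ψ t * A) ^ (1 - θ) / (1 - θ)) := by
    have : Continuous fun t => (Ψ t * A) ^ (1 - θ) :=
      (hΨ.mul continuous_const).rpow_const fun _ => Or.inr (sub_nonneg.2 hθ)
    fun_prop
  refine (hu.intervalIntegrable _ _).congr fun t ht => ?_
  rw [uIoc_of_le hT] at ht
  simp [hc t (Ioc_subset_Icc_self ht)]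

lemma intervalIntegrable_sq_of_running_payoff (hη : η ≠ 0)
    (hc : IntervalIntegrable (fun t => exp (-(ρ * t)) * (c t ^ (1 - θ) / (1 - θ))) volume 0 T)
    (h : IntervalIntegrable
      (fun t => exp (-(ρ * t)) * (c t ^ (1 - θ) / (1 - θ) - η * z t ^ 2)) volume 0 T) :
    IntervalIntegrable (fun t => z t ^ 2) volume 0 T := by
  refine .of_continuous_mul (g := fun t => η * exp (-(ρ * t))) (by fun_prop)
    (fun t => mul_ne_zero hη (exp_pos _).ne') ?_
  convert hc.sub h using 1
  funext t
  ring

lemma stateA_stay_consume_wage (hp : p ≠ 0) :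
    stateA r p ξ a₀ x₀ w (fun _ => w x₀ / p) (fun _ => 0) T = exp (r * T) * a₀ := by
  simp [stateA, stateX, mul_div_cancel₀ _ hp]

/-- Were the asset integrand not integrable, both the asset and the utility integral of `(c, z)`
would take the junk value `0`; staying at `x₀` while consuming the wage there then reaches the
same terminal assets with a positive utility integral. -/
lemma intervalIntegrable_discountedNetWage_of_optimal' (hT : 0 < T) (hθ : θ < 1) (hη : η ≠ 0)
    (hp : 0 < p) (hw : Continuous w) (hwx₀ : 0 < w x₀) (hΨ : Continuous Ψ)
    (hopt : Optimal' ρ r η ξ p θ T a₀ x₀ w c z)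
    (hc : ∀ t ∈ Icc 0 T, c t = Ψ t * stateA r p ξ a₀ x₀ w c z T) :
    IntervalIntegrable (discountedNetWage r ξ x₀ w z) volume 0 T := by
  by_contra hG
  have hJ : ¬ IntervalIntegrable
      (fun t => exp (-(ρ * t)) * (c t ^ (1 - θ) / (1 - θ) - η * z t ^ 2)) volume 0 T :=
    fun hJ => hG <| intervalIntegrable_discountedNetWage hw hopt.1.2.1 <|
      intervalIntegrable_sq_of_running_payoff hη
        (intervalIntegrable_discounted_utility hT.le hθ.le hΨ hc) hJ
  have hstay : stateA r p ξ a₀ x₀ w (fun _ => w x₀ / p) (fun _ => 0) T =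
      stateA r p ξ a₀ x₀ w c z T := by
    rw [stateA_stay_consume_wage hp.ne', stateA_eq_of_not_intervalIntegrable hT.le hΨ hc hG]
  have hle := hopt.2 _ _
    ⟨measurable_const, measurable_const, fun _ _ => by positivity, hstay ▸ hopt.1.2.2.2⟩
  rw [obj, obj, intervalIntegral.integral_undef hJ, hstay] at hle
  have hP :
      0 < ∫ t in 0..T, exp (-(ρ * t)) * ((w x₀ / p) ^ (1 - θ) / (1 - θ) - η * 0 ^ 2) := by
    refine intervalIntegral.intervalIntegral_pos_of_pos
      ((by fun_prop : Continuous _).intervalIntegrable _ _) (fun t => ?_) hT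
    have : 0 < 1 - θ := sub_pos.2 hθ
    rw [zero_pow two_ne_zero, mul_zero, sub_zero]
    positivity
  linarith

end Household

theorem terminal_assets_le_of_wage_le_const_general
    (ρ r η ξ p θ T a₀ x₀ W : ℝ) (w : ℝ → ℝ)
    (hη : 0 < η) (hξ : 0 < ξ) (hp : 0 < p) (hT : 0 < T)
    (hθ : θ ∈ Set.Ioo (0:ℝ) 1) (hw : WageAssumptions w)
    (hx₀ : x₀ ∈ Set.Ioo (0:ℝ) 1)
    (hwW : ∀ x : ℝ, w x ≤ W)
    (c z cbar zbar : ℝ → ℝ)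
    (hopt : Optimal' ρ r η ξ p θ T a₀ x₀ w c z)
    (hc : ∀ t ∈ Set.Icc (0:ℝ) T,
      c t = p ^ (-(1 / θ)) * Real.exp (((ρ - r) / θ) * (T - t)) *
        stateA r p ξ a₀ x₀ w c z T)
    (hcbar : ∀ t ∈ Set.Icc (0:ℝ) T,
      cbar t = p ^ (-(1 / θ)) * Real.exp (((ρ - r) / θ) * (T - t)) *
        stateA r p ξ a₀ x₀ (fun _ => W) cbar zbar T)
    (hzbar : ∀ t ∈ Set.Icc (0:ℝ) T, zbar t = 0) :
    stateA r p ξ a₀ x₀ w c z T ≤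
      stateA r p ξ a₀ x₀ (fun _ => W) cbar zbar T := by
  have hΨ : Continuous fun t => p ^ (-(1 / θ)) * exp (((ρ - r) / θ) * (T - t)) := by fun_prop
  have hG := intervalIntegrable_discountedNetWage_of_optimal' hT hθ.2 hη.ne' hp
    hw.1.continuous (hw.2.2.1 x₀ hx₀) hΨ hopt hc
  have hGbar : IntervalIntegrable (discountedNetWage r ξ x₀ (fun _ => W) zbar) volume 0 T :=
    intervalIntegrable_discountedNetWage_const hT.le hzbar
  refine stateA_le_stateA_of_integral_le hT.le hp.le hΨ (fun t => by positivity) hc hcbar hG hGbar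
    (intervalIntegral.integral_mono_on hT.le hG hGbar fun s hs => ?_)
  simp only [discountedNetWage, hzbar s hs]
  exact mul_le_mul_of_nonneg_right (by nlinarith [hwW (stateX x₀ z s), sq_nonneg (z s)])
    (exp_pos _).le

/-- Proposition: if `w(x) ≤ W` for all `x`, and `a(T)`, `ā(T)` are the optimal
terminal asset values for the problems with wage `w` and constant wage `W`
respectively (all other parameters identical), then `a(T) ≤ ā(T)`.
Both optimal consumptions obey the rule `c(t) = p^{-1/θ} e^{((ρ-r)/θ)(T-t)} ·
(terminal assets)`, and in the constant-wage problem `z̄ ≡ 0`. -/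
theorem terminal_assets_le_of_wage_le_const
    (ρ r η ξ p θ T a₀ x₀ W : ℝ) (w : ℝ → ℝ)
    (hρ : 0 < ρ) (hr : 0 < r) (hη : 0 < η) (hξ : 0 < ξ) (hp : 0 < p) (hT : 0 < T)
    (hθ : θ ∈ Set.Ioo (0:ℝ) 1) (hw : WageAssumptions w)
    (ha₀ : 0 < a₀) (hx₀ : x₀ ∈ Set.Ioo (0:ℝ) 1)
    (hwW : ∀ x : ℝ, w x ≤ W)
    (c z cbar zbar : ℝ → ℝ)
    (hopt : Optimal' ρ r η ξ p θ T a₀ x₀ w c z)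
    (hoptbar : Optimal' ρ r η ξ p θ T a₀ x₀ (fun _ => W) cbar zbar)
    (hc : ∀ t ∈ Set.Icc (0:ℝ) T,
      c t = p ^ (-(1 / θ)) * Real.exp (((ρ - r) / θ) * (T - t)) *
        stateA r p ξ a₀ x₀ w c z T)
    (hcbar : ∀ t ∈ Set.Icc (0:ℝ) T,
      cbar t = p ^ (-(1 / θ)) * Real.exp (((ρ - r) / θ) * (T - t)) *
        stateA r p ξ a₀ x₀ (fun _ => W) cbar zbar T)
    (hzbar : ∀ t ∈ Set.Icc (0:ℝ) T, zbar t = 0) :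
    stateA r p ξ a₀ x₀ w c z T ≤
      stateA r p ξ a₀ x₀ (fun _ => W) cbar zbar T :=
  terminal_assets_le_of_wage_le_const_general ρ r η ξ p θ T a₀ x₀ W w hη hξ hp hT hθ hw hx₀ hwW c z
    cbar zbar hopt hc hcbar hzbar
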